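/- For any v₀ ∈ ℝ, ε > 0, Δt ≥ 0, the update v₁ = v₀ / sqrt(e^{−2Δt/ε²} + v₀²(1 − e^{−2Δt/ε²})) satisfies |v₁| ≤ max(|v₀|, 1) (unconditional stability of the reaction step of the operator-splitting scheme). -/
import Mathlib


/-- Unconditional stability of the reaction step of the operator-splitting
scheme: `|v₁| ≤ max (|v₀|, 1)`. -/
theorem reaction_step_unconditionally_stable (ε Δt v₀ : ℝ) (hε : 0 < ε) (hΔt : 0 ≤ Δt) :
    |v₀ / Real.sqrt (Real.exp (-2*Δt/ε^2) + v₀^2 * (1 - Real.exp (-2*Δt/ε^2)))|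
      ≤ max |v₀| 1 := by
  set q := Real.exp (-2*Δt/ε^2) with hqdef
  have hq0 : 0 < q := Real.exp_pos _
  have hq1 : q ≤ 1 := by
    rw [hqdef]
    apply Real.exp_le_one_iff.mpr
    apply div_nonpos_of_nonpos_of_nonneg
    · linarith
    · positivity
  set D := q + v₀^2 * (1 - q) with hDdef
  have hD0 : 0 < D := by
    have : 0 ≤ v₀^2 * (1 - q) := by
      apply mul_nonneg (sq_nonneg _); linarith
    linarith
  rw [abs_div, abs_of_nonneg (Real.sqrt_nonneg D)]
  rcases le_total (|v₀|) 1 with h | h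
  · apply le_trans _ (le_max_right _ _)
    rw [div_le_one (Real.sqrt_pos.mpr hD0)]
    have hv2 : v₀^2 ≤ 1 := by
      have := abs_nonneg v₀
      nlinarith [sq_abs v₀]
    have : v₀^2 ≤ D := by nlinarith
    calc |v₀| = Real.sqrt (v₀^2) := by rw [Real.sqrt_sq_eq_abs]
    _ ≤ Real.sqrt D := Real.sqrt_le_sqrt this
  · apply le_trans _ (le_max_left _ _)
    have hD1 : 1 ≤ D := by
      have hv2 : 1 ≤ v₀^2 := by nlinarith [sq_abs v₀]
      nlinarith
    have h1 : 1 ≤ Real.sqrt D := by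
      rw [show (1:ℝ) = Real.sqrt 1 by simp]
      exact Real.sqrt_le_sqrt hD1
    calc |v₀| / Real.sqrt D ≤ |v₀| / 1 := by
          apply div_le_div_of_nonneg_left (abs_nonneg v₀) one_pos h1
    _ = |v₀| := div_one _
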